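/- arXiv:math/0612088 — 2 statements merged into one kernel-verified Lean document; each statement's English description precedes it below -/
import Mathlib

section
/- Let N = (X,T,w,w') be a Petri net, Φ(N) its associated commutative word rewriting system, and φ : G(N) → G(Φ(N)) the graph isomorphism sending a marking μ to Σ_{x∈X} μ(x)·x and the arrow given by a transition α applicable at μ to the arrow (Σ_{x∈X}(μ(x)−w(x,α))·x, α). Then for any two parallel paths p, q in G(N), one has p ≡_N q if and only if φ(p) ≡_{Φ(N)} φ(q); i.e. φ identifies the congruence ≡_N with the congruence ≡_{Φ(N)}. -/
universe u u' v v'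

/-- Paths in a graph given by a family of arrow types `Hom`. -/
inductive GPath {Obj : Type u} (Hom : Obj → Obj → Type v) : Obj → Obj → Type (max u v)
  | nil {a : Obj} : GPath Hom a a
  | cons {a b c : Obj} (f : Hom a b) (p : GPath Hom b c) : GPath Hom a c

/-- Composition (concatenation) of paths. -/
def GPath.comp {Obj : Type u} {Hom : Obj → Obj → Type v} :
    ∀ {a b c : Obj}, GPath Hom a b → GPath Hom b c → GPath Hom a c
  | _, _, _, .nil, q => q
  | _, _, _, .cons f p, q => .cons f (p.comp q)

/-- Image of a path under a graph morphism. -/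
def GPath.map {Obj : Type u} {Obj' : Type u'} {Hom : Obj → Obj → Type v}
    {Hom' : Obj' → Obj' → Type v'} (F0 : Obj → Obj')
    (F1 : ∀ {a b : Obj}, Hom a b → Hom' (F0 a) (F0 b)) :
    ∀ {a b : Obj}, GPath Hom a b → GPath Hom' (F0 a) (F0 b)
  | _, _, .nil => .nil
  | _, _, .cons f p => .cons (F1 f) (GPath.map F0 F1 p)

/-- A Petri net on a set `X` of places and a set `T` of transitions. -/
structure PetriNet (X T : Type) where
  w : X → T → ℕ
  w' : T → X → ℕ

/-- A commutative word rewriting system with alphabet `X` and rules indexed by `A`. -/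
structure CWRS (X A : Type) where
  src : A → X →₀ ℕ
  tgt : A → X →₀ ℕ

/-- The translation `Φ` from Petri nets to commutative word rewriting systems. -/
noncomputable def Phi {X T : Type} [Fintype X] (N : PetriNet X T) : CWRS X T where
  src α := Finsupp.equivFunOnFinite.symm fun x => N.w x α
  tgt α := Finsupp.equivFunOnFinite.symm fun x => N.w' α x

/-- Arrows of the reduction graph `G(N)` from marking `μ` to marking `ν`. -/
def PetriStep {X T : Type} (N : PetriNet X T) (μ ν : X → ℕ) : Type :=
  {α : T // (∀ x, N.w x α ≤ μ x) ∧ ∀ x, ν x = μ x - N.w x α + N.w' α x}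

/-- Arrows of the reduction graph `G(X,R)` from `a` to `b`. -/
def CwrsStep {X A : Type} (S : CWRS X A) (a b : X →₀ ℕ) : Type :=
  {p : (X →₀ ℕ) × A // a = p.1 + S.src p.2 ∧ b = p.1 + S.tgt p.2}

/-- The congruence `≡_N` on parallel paths of `G(N)`: the smallest equivalence
relation, compatible with path composition, identifying the two-step paths
`μ₁ →_α ν₁ →_β μ₂` and `μ₁ →_β ν₂ →_α μ₂` whenever there is a marking `ρ` with
`μ₁ = ρ + w(-,α) + w(-,β)`, `ν₁ = ρ + w'(α,-) + w(-,β)`,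
`ν₂ = ρ + w(-,α) + w'(β,-)`, `μ₂ = ρ + w'(α,-) + w'(β,-)` pointwise. -/
inductive PetriCong {X T : Type} (N : PetriNet X T) :
    ∀ {μ ν : X → ℕ}, GPath (PetriStep N) μ ν → GPath (PetriStep N) μ ν → Prop
  | square {μ₁ ν₁ ν₂ μ₂ : X → ℕ} (ρ : X → ℕ) (α β : T)
      (f₁ : PetriStep N μ₁ ν₁) (g₁ : PetriStep N ν₁ μ₂)
      (f₂ : PetriStep N μ₁ ν₂) (g₂ : PetriStep N ν₂ μ₂)
      (hf₁ : f₁.1 = α) (hg₁ : g₁.1 = β) (hf₂ : f₂.1 = β) (hg₂ : g₂.1 = α)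
      (hμ₁ : ∀ x, μ₁ x = ρ x + N.w x α + N.w x β)
      (hν₁ : ∀ x, ν₁ x = ρ x + N.w' α x + N.w x β)
      (hν₂ : ∀ x, ν₂ x = ρ x + N.w x α + N.w' β x)
      (hμ₂ : ∀ x, μ₂ x = ρ x + N.w' α x + N.w' β x) :
      PetriCong N (.cons f₁ (.cons g₁ .nil)) (.cons f₂ (.cons g₂ .nil))
  | refl {μ ν : X → ℕ} (p : GPath (PetriStep N) μ ν) : PetriCong N p p
  | symm {μ ν : X → ℕ} {p q : GPath (PetriStep N) μ ν} :
      PetriCong N p q → PetriCong N q p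
  | trans {μ ν : X → ℕ} {p q r : GPath (PetriStep N) μ ν} :
      PetriCong N p q → PetriCong N q r → PetriCong N p r
  | comp {μ ν ξ : X → ℕ} {p p' : GPath (PetriStep N) μ ν} {q q' : GPath (PetriStep N) ν ξ} :
      PetriCong N p p' → PetriCong N q q' → PetriCong N (p.comp q) (p'.comp q')

/-- The congruence `≡_{(X,R)}` on parallel paths of `G(X,R)`: the smallest
equivalence relation, compatible with path composition, identifying for every
context `c` and rules `α`, `β` the path `(c+s(β),α)` followed by `(c+t(α),β)`
with the path `(c+s(α),β)` followed by `(c+t(β),α)`. -/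
inductive CwrsCong {X A : Type} (S : CWRS X A) :
    ∀ {a b : X →₀ ℕ}, GPath (CwrsStep S) a b → GPath (CwrsStep S) a b → Prop
  | square {a m₁ m₂ b : X →₀ ℕ} (c : X →₀ ℕ) (α β : A)
      (f₁ : CwrsStep S a m₁) (g₁ : CwrsStep S m₁ b)
      (f₂ : CwrsStep S a m₂) (g₂ : CwrsStep S m₂ b)
      (hf₁ : f₁.1 = (c + S.src β, α)) (hg₁ : g₁.1 = (c + S.tgt α, β))
      (hf₂ : f₂.1 = (c + S.src α, β)) (hg₂ : g₂.1 = (c + S.tgt β, α)) :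
      CwrsCong S (.cons f₁ (.cons g₁ .nil)) (.cons f₂ (.cons g₂ .nil))
  | refl {a b : X →₀ ℕ} (p : GPath (CwrsStep S) a b) : CwrsCong S p p
  | symm {a b : X →₀ ℕ} {p q : GPath (CwrsStep S) a b} :
      CwrsCong S p q → CwrsCong S q p
  | trans {a b : X →₀ ℕ} {p q r : GPath (CwrsStep S) a b} :
      CwrsCong S p q → CwrsCong S q r → CwrsCong S p r
  | comp {a b c : X →₀ ℕ} {p p' : GPath (CwrsStep S) a b} {q q' : GPath (CwrsStep S) b c} :
      CwrsCong S p p' → CwrsCong S q q' → CwrsCong S (p.comp q) (p'.comp q')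

/-- The object part of `φ`: a marking `μ` is sent to `Σ_x μ(x)·x ∈ [X]`. -/
noncomputable def phi0 {X : Type} [Fintype X] : (X → ℕ) → (X →₀ ℕ) :=
  fun μ => Finsupp.equivFunOnFinite.symm μ

/-- The arrow part of `φ`. -/
noncomputable def phiStep {X T : Type} [Fintype X] (N : PetriNet X T) {μ ν : X → ℕ}
    (f : PetriStep N μ ν) : CwrsStep (Phi N) (phi0 μ) (phi0 ν) :=
  ⟨(Finsupp.equivFunOnFinite.symm fun x => μ x - N.w x f.1, f.1), by
    obtain ⟨α, h1, h2⟩ := f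
    constructor <;> ext x <;>
      · have hx1 := h1 x
        have hx2 := h2 x
        simp [phi0, Phi, Finsupp.add_apply]
        omega⟩



/-! Both congruences are generated by commuting squares, and `φ` matches them exactly: a square
of `G(N)` with residual marking `ρ` is sent to the square of `G(Φ(N))` with context `φ(ρ)`.
Conversely, forgetting the context of an arrow of `G(Φ(N))` and reading an element of `[X]` as
a marking gives a morphism `ψ` back to `G(N)` that also sends squares to squares, and `ψ ∘ φ`
is the identity on paths. Since path maps respect composition, `φ` and `ψ` carry each
congruence into the other. -/

theorem GPath.map_comp {Obj : Type u} {Obj' : Type u'} {Hom : Obj → Obj → Type v}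
    {Hom' : Obj' → Obj' → Type v'} (F0 : Obj → Obj')
    (F1 : ∀ {a b : Obj}, Hom a b → Hom' (F0 a) (F0 b)) :
    ∀ {a b c : Obj} (p : GPath Hom a b) (q : GPath Hom b c),
      (p.comp q).map F0 F1 = (p.map F0 F1).comp (q.map F0 F1)
  | _, _, _, .nil, _ => rfl
  | _, _, _, .cons f p, q => congrArg (GPath.cons (F1 f)) (GPath.map_comp F0 F1 p q)

section Translation

variable {X T : Type} [Fintype X] (N : PetriNet X T)

@[simp]
theorem phi0_apply (μ : X → ℕ) (x : X) : phi0 μ x = μ x := rfl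

@[simp]
theorem Phi_src_apply (α : T) (x : X) : (Phi N).src α x = N.w x α := rfl

@[simp]
theorem Phi_tgt_apply (α : T) (x : X) : (Phi N).tgt α x = N.w' α x := rfl

@[simp]
theorem phiStep_context_apply {μ ν : X → ℕ} (f : PetriStep N μ ν) (x : X) :
    (phiStep N f).1.1 x = μ x - N.w x f.1 := rfl

def psiStep {a b : X →₀ ℕ} (g : CwrsStep (Phi N) a b) : PetriStep N a b :=
  ⟨g.1.2, by
    obtain ⟨⟨c, α⟩, rfl, rfl⟩ := g
    exact ⟨fun x => by simp, fun x => by simp⟩⟩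

theorem map_psiStep_map_phiStep :
    ∀ {μ ν : X → ℕ} (p : GPath (PetriStep N) μ ν),
      ((p.map phi0 fun {_ _} f => phiStep N f).map (fun a : X →₀ ℕ => (a : X → ℕ))
        fun {_ _} g => psiStep N g) = p
  | _, _, .nil => rfl
  | _, _, .cons _ p => congrArg (GPath.cons _) (map_psiStep_map_phiStep p)

theorem phiStep_eq {μ ν : X → ℕ} {c : X →₀ ℕ} {α : T} (f : PetriStep N μ ν)
    (hf : f.1 = α) (hμ : ∀ x, μ x = c x + N.w x α) : (phiStep N f).1 = (c, α) := by
  refine Prod.ext (Finsupp.ext fun x => ?_) hf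
  simp [hf, hμ]

theorem PetriCong.map_phiStep {μ ν : X → ℕ} {p q : GPath (PetriStep N) μ ν}
    (h : PetriCong N p q) :
    CwrsCong (Phi N) (p.map phi0 fun {_ _} f => phiStep N f)
      (q.map phi0 fun {_ _} f => phiStep N f) := by
  induction h with
  | square ρ α β f₁ g₁ f₂ g₂ hf₁ hg₁ hf₂ hg₂ hμ₁ hν₁ hν₂ _ =>
    refine CwrsCong.square (phi0 ρ) α β _ _ _ _
      (phiStep_eq N f₁ hf₁ ?_) (phiStep_eq N g₁ hg₁ ?_)
      (phiStep_eq N f₂ hf₂ ?_) (phiStep_eq N g₂ hg₂ ?_) <;> intro x <;>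
      simp only [Finsupp.add_apply, phi0_apply, Phi_src_apply, Phi_tgt_apply, hμ₁, hν₁, hν₂] <;>
      omega
  | refl p => exact .refl _
  | symm _ ih => exact .symm ih
  | trans _ _ ih₁ ih₂ => exact .trans ih₁ ih₂
  | comp _ _ ih₁ ih₂ =>
    rw [GPath.map_comp, GPath.map_comp]
    exact .comp ih₁ ih₂

theorem CwrsCong.map_psiStep {a b : X →₀ ℕ} {p q : GPath (CwrsStep (Phi N)) a b}
    (h : CwrsCong (Phi N) p q) :
    PetriCong N (p.map (fun a : X →₀ ℕ => (a : X → ℕ)) fun {_ _} g => psiStep N g)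
      (q.map (fun a : X →₀ ℕ => (a : X → ℕ)) fun {_ _} g => psiStep N g) := by
  induction h with
  | square c α β f₁ g₁ f₂ g₂ hf₁ hg₁ hf₂ hg₂ =>
    obtain ⟨_, ha, hm₁⟩ := f₁
    obtain ⟨_, _, hb⟩ := g₁
    obtain ⟨_, _, hm₂⟩ := f₂
    obtain ⟨_, _, _⟩ := g₂
    dsimp only at hf₁ hg₁ hf₂ hg₂
    subst hf₁ hg₁ hf₂ hg₂
    refine PetriCong.square c α β _ _ _ _ rfl rfl rfl rfl ?_ ?_ ?_ ?_ <;> intro x <;>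
      simp only [ha, hm₁, hm₂, hb, Finsupp.add_apply, Phi_src_apply, Phi_tgt_apply] <;>
      omega
  | refl p => exact .refl _
  | symm _ ih => exact .symm ih
  | trans _ _ ih₁ ih₂ => exact .trans ih₁ ih₂
  | comp _ _ ih₁ ih₂ =>
    rw [GPath.map_comp, GPath.map_comp]
    exact .comp ih₁ ih₂

end Translation

theorem phi_cong_iff_general {X T : Type} [Fintype X] (N : PetriNet X T)
    {μ ν : X → ℕ} (p q : GPath (PetriStep N) μ ν) :
    PetriCong N p q ↔
      CwrsCong (Phi N) (p.map phi0 fun {_ _} f => phiStep N f)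
        (q.map phi0 fun {_ _} f => phiStep N f) := by
  refine ⟨PetriCong.map_phiStep N, fun h => ?_⟩
  have h' := CwrsCong.map_psiStep N h
  rwa [map_psiStep_map_phiStep, map_psiStep_map_phiStep] at h'

/-- The graph isomorphism `φ : G(N) → G(Φ(N))` identifies the congruences
`≡_N` and `≡_{Φ(N)}`: two parallel paths `p`, `q` of `G(N)` satisfy `p ≡_N q`
if and only if `φ(p) ≡_{Φ(N)} φ(q)`. -/
theorem phi_cong_iff {X T : Type} [Fintype X] [Fintype T] (N : PetriNet X T)
    {μ ν : X → ℕ} (p q : GPath (PetriStep N) μ ν) :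
    PetriCong N p q ↔
      CwrsCong (Phi N) (p.map phi0 fun {_ _} f => phiStep N f)
        (q.map phi0 fun {_ _} f => phiStep N f) :=
  phi_cong_iff_general N p q
end

section
/- Let (X,R) be a commutative word rewriting system with X totally ordered, Σ²(X,R) its associated 2-polygraph, and π the surjective functor from the free category on G(Σ²(X,R)) to the free category on G(X,R) determined by π(u ⊗ τ_{x,y} ⊗ v) = id_{π(u)+x+y+π(v)} and π(u ⊗ α ⊗ v) = (π(u)+π(v), α). If p and q are parallel paths in G(Σ²(X,R)) with p ≡₀₁ q, where ≡₀₁ is the exchange congruence, then π(p) ≡_{(X,R)} π(q). Consequently π induces a functor between the quotient categories by these congruences. -/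
universe u u' v v'

/-- The canonical projection `π : X* → [X]`, sending a word to the sum of its letters. -/
noncomputable def pi {X : Type} [DecidableEq X] (u : List X) : X →₀ ℕ :=
  Multiset.toFinsupp (u : Multiset X)

theorem pi_append {X : Type} [DecidableEq X] (u v : List X) :
    pi (u ++ v) = pi u + pi v := by
  simp only [pi]
  rw [← Multiset.coe_add, map_add]

/-- The canonical representative word `ā ∈ X*` of `a ∈ [X]`. -/
noncomputable def bar {X : Type} [LinearOrder X] (a : X →₀ ℕ) : List X :=
  (Finsupp.toMultiset a).sort (· ≤ ·)

theorem pi_bar {X : Type} [LinearOrder X] (a : X →₀ ℕ) : pi (bar a) = a := by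
  simp [pi, bar]

/-- The 2-cells of the 2-polygraph `Σ²(X,R)`. -/
inductive Cell2 (X A : Type)
  | tau (x y : X) (h : x ≠ y)
  | rule (α : A)

/-- The 1-source of a 2-cell. -/
noncomputable def src1 {X A : Type} [LinearOrder X] (S : CWRS X A) : Cell2 X A → List X
  | .tau x y _ => [x, y]
  | .rule α => bar (S.src α)

/-- The 1-target of a 2-cell. -/
noncomputable def tgt1 {X A : Type} [LinearOrder X] (S : CWRS X A) : Cell2 X A → List X
  | .tau x y _ => [y, x]
  | .rule α => bar (S.tgt α)

/-- Arrows of the reduction graph `G(Σ²(X,R))` from the word `u` to the word `v`. -/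
def PolyStep {X A : Type} [LinearOrder X] (S : CWRS X A) (u v : List X) : Type :=
  {t : List X × Cell2 X A × List X //
    u = t.1 ++ src1 S t.2.1 ++ t.2.2 ∧ v = t.1 ++ tgt1 S t.2.1 ++ t.2.2}

/-- The exchange congruence `≡₀₁` on parallel paths of `G(Σ²(X,R))`: the
smallest equivalence relation, compatible with path composition, identifying
for all 2-cells `φ`, `ψ` and all words `u`, `v`, `w` the path
`u ⊗ φ ⊗ (v ⊗ s₁(ψ) ⊗ w)` followed by `(u ⊗ t₁(φ) ⊗ v) ⊗ ψ ⊗ w`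
with the path `(u ⊗ s₁(φ) ⊗ v) ⊗ ψ ⊗ w` followed by `u ⊗ φ ⊗ (v ⊗ t₁(ψ) ⊗ w)`. -/
inductive Exch {X A : Type} [LinearOrder X] (S : CWRS X A) :
    ∀ {u v : List X}, GPath (PolyStep S) u v → GPath (PolyStep S) u v → Prop
  | exchange {a m₁ m₂ b : List X} (u v w : List X) (φ ψ : Cell2 X A)
      (f₁ : PolyStep S a m₁) (g₁ : PolyStep S m₁ b)
      (f₂ : PolyStep S a m₂) (g₂ : PolyStep S m₂ b)
      (hf₁ : f₁.1 = (u, φ, v ++ src1 S ψ ++ w))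
      (hg₁ : g₁.1 = (u ++ tgt1 S φ ++ v, ψ, w))
      (hf₂ : f₂.1 = (u ++ src1 S φ ++ v, ψ, w))
      (hg₂ : g₂.1 = (u, φ, v ++ tgt1 S ψ ++ w)) :
      Exch S (.cons f₁ (.cons g₁ .nil)) (.cons f₂ (.cons g₂ .nil))
  | refl {u v : List X} (p : GPath (PolyStep S) u v) : Exch S p p
  | symm {u v : List X} {p q : GPath (PolyStep S) u v} : Exch S p q → Exch S q p
  | trans {u v : List X} {p q r : GPath (PolyStep S) u v} :
      Exch S p q → Exch S q r → Exch S p r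
  | comp {u v w : List X} {p p' : GPath (PolyStep S) u v} {q q' : GPath (PolyStep S) v w} :
      Exch S p p' → Exch S q q' → Exch S (p.comp q) (p'.comp q')

/-- The value of the functor `π` on a generating arrow of `G(Σ²(X,R))`:
an arrow `u ⊗ τ_{x,y} ⊗ v` is sent to the identity (empty) path at
`π(u)+x+y+π(v)`, and an arrow `u ⊗ α ⊗ v` (for `α` a rule) is sent to the
one-step path given by the arrow `(π(u)+π(v), α)` of `G(X,R)`. -/
noncomputable def piStep {X A : Type} [LinearOrder X] (S : CWRS X A) {u v : List X}
    (f : PolyStep S u v) : GPath (CwrsStep S) (pi u) (pi v) := by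
  obtain ⟨⟨h, φ, k⟩, h1, h2⟩ := f
  cases φ with
  | tau x y hxy =>
    have key : pi v = pi u := by
      subst h1; subst h2
      simp only [src1, tgt1, pi_append]
      have : pi [y, x] = pi [x, y] := by
        simp only [pi]
        congr 1
        exact Multiset.coe_eq_coe.mpr (List.Perm.swap x y [])
      rw [this]
    rw [key]
    exact .nil
  | rule α =>
    refine .cons (⟨(pi h + pi k, α), ?_, ?_⟩ : CwrsStep S (pi u) (pi v)) .nil
    · subst h1
      simp only [src1, pi_append, pi_bar]
      abel
    · subst h2
      simp only [tgt1, pi_append, pi_bar]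
      abel

/-- The functor `π` from the free category on `G(Σ²(X,R))` to the free category
on `G(X,R)`, on paths. -/
noncomputable def piPath {X A : Type} [LinearOrder X] (S : CWRS X A) :
    ∀ {u v : List X}, GPath (PolyStep S) u v → GPath (CwrsStep S) (pi u) (pi v)
  | _, _, .nil => .nil
  | _, _, .cons f p => (piStep S f).comp (piPath S p)

/-!
The functor `π` erases the cells `τ` and sends a rule cell `u ⊗ α ⊗ v` to the single arrow
`(π(u)+π(v), α)`. Hence `π` of an exchange square of two rule cells is the commutation square of
`G(X,R)` with context `π(u)+π(v)+π(w)`, while if a `τ` is involved both sides of the square have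
the same sequence of arrow labels `(c, α)`; a path of `G(X,R)` is determined by its endpoints and
its labels, since the label of an arrow determines its target.
-/

namespace GPath

variable {Obj : Type u} {Hom : Obj → Obj → Type v}

theorem comp_assoc {a b c d : Obj} (p : GPath Hom a b) (q : GPath Hom b c) (r : GPath Hom c d) :
    (p.comp q).comp r = p.comp (q.comp r) := by
  induction p with
  | nil => rfl
  | cons f p ih => simp only [comp, ih]

variable {L : Type v'}

def labels (ℓ : ∀ a b : Obj, Hom a b → L) : ∀ {a b : Obj}, GPath Hom a b → List L
  | _, _, .nil => []
  | _, _, .cons f p => ℓ _ _ f :: p.labels ℓ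

@[simp]
theorem labels_nil (ℓ : ∀ a b : Obj, Hom a b → L) {a : Obj} :
    (nil : GPath Hom a a).labels ℓ = [] := rfl

@[simp]
theorem labels_cons (ℓ : ∀ a b : Obj, Hom a b → L) {a b c : Obj} (f : Hom a b)
    (p : GPath Hom b c) : (cons f p).labels ℓ = ℓ _ _ f :: p.labels ℓ := rfl

@[simp]
theorem labels_comp (ℓ : ∀ a b : Obj, Hom a b → L) {a b c : Obj} (p : GPath Hom a b)
    (q : GPath Hom b c) : (p.comp q).labels ℓ = p.labels ℓ ++ q.labels ℓ := by
  induction p with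
  | nil => rfl
  | cons f p ih => simp only [comp, labels_cons, ih, List.cons_append]

theorem labels_eq_of_heq (ℓ : ∀ a b : Obj, Hom a b → L) {a b b' : Obj} (hb : b = b')
    {p : GPath Hom a b} {q : GPath Hom a b'} (h : HEq p q) : p.labels ℓ = q.labels ℓ := by
  subst hb; rw [eq_of_heq h]

theorem exists_eq_cons_cons_of_labels_eq (ℓ : ∀ a b : Obj, Hom a b → L) {a b : Obj}
    {p : GPath Hom a b} {l₁ l₂ : L} (hp : p.labels ℓ = [l₁, l₂]) :
    ∃ (m : Obj) (f : Hom a m) (g : Hom m b),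
      p = cons f (cons g nil) ∧ ℓ _ _ f = l₁ ∧ ℓ _ _ g = l₂ := by
  rcases p with _ | ⟨f, _ | ⟨g, _ | ⟨h, r⟩⟩⟩ <;>
    simp only [labels_cons, labels_nil, List.cons.injEq, reduceCtorEq, and_false] at hp
  exact ⟨_, f, g, rfl, hp.1, hp.2.1⟩

end GPath

theorem pi_perm {X : Type} [DecidableEq X] {l₁ l₂ : List X} (h : l₁.Perm l₂) : pi l₁ = pi l₂ :=
  congrArg Multiset.toFinsupp (Multiset.coe_eq_coe.mpr h)

theorem CwrsStep.path_eq_of_labels_eq {X A : Type} (S : CWRS X A) {a b : X →₀ ℕ}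
    {p q : GPath (CwrsStep S) a b}
    (h : p.labels (fun _ _ f => f.1) = q.labels (fun _ _ f => f.1)) : p = q := by
  induction p with
  | nil => cases q with
    | nil => rfl
    | cons f q => simp at h
  | cons f p ih => cases q with
    | nil => simp at h
    | cons f' q =>
      simp only [GPath.labels_cons, List.cons.injEq] at h
      obtain ⟨hf, hpq⟩ := h
      obtain rfl : _ = _ :=
        f'.2.2.trans ((congrArg (fun l => l.1 + S.tgt l.2) hf).symm.trans f.2.2.symm)
      rw [Subtype.ext hf, ih hpq]

section Projection

variable {X A : Type} [LinearOrder X] (S : CWRS X A)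

noncomputable def piLabels : List X × Cell2 X A × List X → List ((X →₀ ℕ) × A)
  | (_, .tau .., _) => []
  | (h, .rule α, k) => [(pi h + pi k, α)]

theorem labels_piStep {u v : List X} (f : PolyStep S u v) :
    (piStep S f).labels (fun _ _ f => f.1) = piLabels f.1 := by
  obtain ⟨⟨h, φ, k⟩, h1, h2⟩ := f
  cases φ with
  | tau x y =>
    have hpi : pi v = pi u := by
      subst h1 h2
      simp only [src1, tgt1, pi_append, pi_perm (List.Perm.swap x y [])]
    simp only [piStep, piLabels, eq_mpr_eq_cast]
    exact GPath.labels_eq_of_heq _ hpi (cast_heq _ _)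
  | rule α => rfl

theorem labels_piPath_cons {u v w : List X} (f : PolyStep S u v) (p : GPath (PolyStep S) v w) :
    (piPath S (.cons f p)).labels (fun _ _ f => f.1) =
      piLabels f.1 ++ (piPath S p).labels (fun _ _ f => f.1) := by
  rw [piPath, GPath.labels_comp, labels_piStep]

theorem piPath_comp {u v w : List X} (p : GPath (PolyStep S) u v) (q : GPath (PolyStep S) v w) :
    piPath S (p.comp q) = (piPath S p).comp (piPath S q) := by
  induction p with
  | nil => rfl
  | cons f p ih => rw [GPath.comp, piPath, piPath, ih, GPath.comp_assoc]

theorem cwrsCong_piPath_exchange {a m₁ m₂ b : List X} (u v w : List X) (φ ψ : Cell2 X A)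
    (f₁ : PolyStep S a m₁) (g₁ : PolyStep S m₁ b) (f₂ : PolyStep S a m₂) (g₂ : PolyStep S m₂ b)
    (hf₁ : f₁.1 = (u, φ, v ++ src1 S ψ ++ w)) (hg₁ : g₁.1 = (u ++ tgt1 S φ ++ v, ψ, w))
    (hf₂ : f₂.1 = (u ++ src1 S φ ++ v, ψ, w)) (hg₂ : g₂.1 = (u, φ, v ++ tgt1 S ψ ++ w)) :
    CwrsCong S (piPath S (.cons f₁ (.cons g₁ .nil))) (piPath S (.cons f₂ (.cons g₂ .nil))) := by
  have hl₁ : (piPath S (.cons f₁ (.cons g₁ .nil))).labels (fun _ _ f => f.1) =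
      piLabels (u, φ, v ++ src1 S ψ ++ w) ++ piLabels (u ++ tgt1 S φ ++ v, ψ, w) := by
    rw [labels_piPath_cons, labels_piPath_cons, hf₁, hg₁, piPath, GPath.labels_nil,
      List.append_nil]
  have hl₂ : (piPath S (.cons f₂ (.cons g₂ .nil))).labels (fun _ _ f => f.1) =
      piLabels (u ++ src1 S φ ++ v, ψ, w) ++ piLabels (u, φ, v ++ tgt1 S ψ ++ w) := by
    rw [labels_piPath_cons, labels_piPath_cons, hf₂, hg₂, piPath, GPath.labels_nil,
      List.append_nil]
  have of_labels_eq (h : piLabels (u, φ, v ++ src1 S ψ ++ w) ++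
      piLabels (u ++ tgt1 S φ ++ v, ψ, w) = piLabels (u ++ src1 S φ ++ v, ψ, w) ++
      piLabels (u, φ, v ++ tgt1 S ψ ++ w)) :
      CwrsCong S (piPath S (.cons f₁ (.cons g₁ .nil))) (piPath S (.cons f₂ (.cons g₂ .nil))) :=
    CwrsStep.path_eq_of_labels_eq S (hl₁.trans (h.trans hl₂.symm)) ▸ .refl _
  rcases φ with ⟨x, y, _⟩ | α <;> rcases ψ with ⟨x', y', _⟩ | β
  · exact of_labels_eq rfl
  · apply of_labels_eq
    simp only [piLabels, src1, tgt1, List.nil_append, List.append_nil, pi_append,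
      pi_perm (List.Perm.swap x y [])]
  · apply of_labels_eq
    simp only [piLabels, src1, tgt1, List.nil_append, List.append_nil, pi_append,
      pi_perm (List.Perm.swap x' y' [])]
  · simp only [piLabels, List.cons_append, List.nil_append] at hl₁ hl₂
    obtain ⟨_, s₁, t₁, hp, hs₁, ht₁⟩ := GPath.exists_eq_cons_cons_of_labels_eq _ hl₁
    obtain ⟨_, s₂, t₂, hq, hs₂, ht₂⟩ := GPath.exists_eq_cons_cons_of_labels_eq _ hl₂
    rw [hp, hq]
    refine .square (pi u + pi v + pi w) α β s₁ t₁ s₂ t₂ ?_ ?_ ?_ ?_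
    all_goals
      simp only [hs₁, ht₁, hs₂, ht₂, src1, tgt1, pi_append, pi_bar, Prod.mk.injEq, and_true]
      abel

variable {S} in
theorem Exch.cwrsCong_piPath {u v : List X} {p q : GPath (PolyStep S) u v} (h : Exch S p q) :
    CwrsCong S (piPath S p) (piPath S q) := by
  induction h with
  | exchange u v w φ ψ f₁ g₁ f₂ g₂ hf₁ hg₁ hf₂ hg₂ =>
    exact cwrsCong_piPath_exchange S u v w φ ψ f₁ g₁ f₂ g₂ hf₁ hg₁ hf₂ hg₂
  | refl p => exact .refl _
  | symm _ ih => exact ih.symm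
  | trans _ _ ih₁ ih₂ => exact ih₁.trans ih₂
  | comp _ _ ih₁ ih₂ => rw [piPath_comp, piPath_comp]; exact ih₁.comp ih₂

end Projection

/-- If `p` and `q` are parallel paths of `G(Σ²(X,R))` identified by the exchange
congruence `≡₀₁`, then their images under the functor `π` are identified by the
congruence `≡_{(X,R)}`; consequently `π` induces a map between the quotients of
the hom-sets of the free categories by these congruences (hence a functor
between the quotient categories). -/
theorem pi_preserves_cong {X A : Type} [LinearOrder X] (S : CWRS X A) :
    (∀ {u v : List X} (p q : GPath (PolyStep S) u v),
      Exch S p q → CwrsCong S (piPath S p) (piPath S q)) ∧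
    ∃ Pibar : ∀ u v : List X,
        Quot (fun p q : GPath (PolyStep S) u v => Exch S p q) →
        Quot (fun p q : GPath (CwrsStep S) (pi u) (pi v) => CwrsCong S p q),
      ∀ (u v : List X) (p : GPath (PolyStep S) u v),
        Pibar u v (Quot.mk _ p) = Quot.mk _ (piPath S p) :=
  ⟨fun _ _ h => h.cwrsCong_piPath,
    fun _ _ => Quot.map (piPath S) fun _ _ => Exch.cwrsCong_piPath,
    fun _ _ _ => rfl⟩
end
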